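/- In any RRC market, if K is an optimal cutoff profile, then the induced matching μ(K) is direct-envy stable. -/

import Mathlib

namespace RRC

section Defs

variable (S C R : Type)

/-- A matching market with resource-regional caps (RRC).  Students `S`, colleges `C`,
non-empty resources `R`; the empty resource `r0` is represented by `none : Option R`. -/
structure Market where
  /-- quota of each college -/
  qC : C → ℕ
  qC_pos : ∀ c, 0 < qC c
  /-- quota of each non-empty resource -/
  qR : R → ℕ
  qR_pos : ∀ r, 0 < qR r
  /-- region of each non-empty resource (the region of `r0` is all of `C`) -/
  region : R → Finset C
  region_nonempty : ∀ r, (region r).Nonempty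
  /-- strict priority order of each college over students -/
  prC : C → S → S → Prop
  prC_sto : ∀ c, IsStrictTotalOrder S (prC c)
  /-- strict preference order of each student over `(C × R0) ∪ {∅}`;
  `none` is the outside option `∅` -/
  prS : S → Option (C × Option R) → Option (C × Option R) → Prop
  prS_sto : ∀ s, IsStrictTotalOrder (Option (C × Option R)) (prS s)

/-- A matching: each student appears in at most one contract, so a matching is a
function from students to optional (college, resource) pairs. -/
abbrev Matching := S → Option (C × Option R)

variable {S C R} [DecidableEq S]

/-- Number of contracts of the college `c` in `μ`. -/
noncomputable def collegeCount (μ : Matching S C R) (c : C) : ℕ :=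
  {s : S | ∃ r, μ s = some (c, r)}.ncard

/-- Number of contracts containing the non-empty resource `r` in `μ`. -/
noncomputable def resourceCount (μ : Matching S C R) (r : R) : ℕ :=
  {s : S | ∃ c, μ s = some (c, some r)}.ncard

/-- Feasibility: college quotas, resource quotas, and regions are respected. -/
def Feasible (M : Market S C R) (μ : Matching S C R) : Prop :=
  (∀ c, collegeCount μ c ≤ M.qC c) ∧
  (∀ r, resourceCount μ r ≤ M.qR r) ∧
  (∀ s c r, μ s = some (c, some r) → c ∈ M.region r)

/-- A pair `(c, r)` is acceptable for `s` if `s` prefers it to being unmatched. -/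
def Acceptable (M : Market S C R) (s : S) (c : C) (r : Option R) : Prop :=
  M.prS s (some (c, r)) none

/-- Individual rationality: no unacceptable contract is used. -/
def IndRational (M : Market S C R) (μ : Matching S C R) : Prop :=
  ∀ s x, μ s = some x → M.prS s (some x) none

/-- The contract `(s, c, r) ∉ μ` envy-blocks `μ` through `(s', c, r') ∈ μ`. -/
def EnvyBlocksThrough (M : Market S C R) (μ : Matching S C R)
    (s : S) (c : C) (r : Option R) (s' : S) (r' : Option R) : Prop :=
  μ s ≠ some (c, r) ∧ μ s' = some (c, r') ∧
  M.prS s (some (c, r)) (μ s) ∧ M.prC c s s' ∧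
  Feasible M (Function.update (Function.update μ s' none) s (some (c, r)))

def EnvyBlocks (M : Market S C R) (μ : Matching S C R)
    (s : S) (c : C) (r : Option R) : Prop :=
  ∃ s' r', EnvyBlocksThrough M μ s c r s' r'

def EnvyFree (M : Market S C R) (μ : Matching S C R) : Prop :=
  ∀ s c r, ¬ EnvyBlocks M μ s c r

/-- The contract `(s, c, r) ∉ μ` waste-blocks `μ`. -/
def WasteBlocks (M : Market S C R) (μ : Matching S C R)
    (s : S) (c : C) (r : Option R) : Prop :=
  μ s ≠ some (c, r) ∧ M.prS s (some (c, r)) (μ s) ∧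
  Feasible M (Function.update μ s (some (c, r)))

def NonWasteful (M : Market S C R) (μ : Matching S C R) : Prop :=
  ∀ s c r, ¬ WasteBlocks M μ s c r

/-- Stability: feasible, individually rational, no envy-blocking and no
waste-blocking contract. -/
def Stable (M : Market S C R) (μ : Matching S C R) : Prop :=
  Feasible M μ ∧ IndRational M μ ∧ EnvyFree M μ ∧ NonWasteful M μ

/-- `(s, c, r)` direct-envy-blocks `μ`: it envy-blocks through some `(s', c, r')`
with `r ∈ {r', r0}`. -/
def DirectEnvyBlocks (M : Market S C R) (μ : Matching S C R)
    (s : S) (c : C) (r : Option R) : Prop :=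
  ∃ s' r', EnvyBlocksThrough M μ s c r s' r' ∧ (r = r' ∨ r = none)

/-- The waste-blocking contract `(s, c, r)` is dominated by `(s', c, r') ∉ μ`. -/
def Dominates (M : Market S C R) (μ : Matching S C R)
    (s : S) (c : C) (r : Option R) (s' : S) (r' : Option R) : Prop :=
  μ s' ≠ some (c, r') ∧
  ¬ WasteBlocks M μ s' c r' ∧ ¬ DirectEnvyBlocks M μ s' c r' ∧
  DirectEnvyBlocks M (Function.update μ s (some (c, r))) s' c r'

/-- Direct-envy stability: feasible, individually rational, no direct-envy-blocking
contract, and every waste-blocking contract is dominated. -/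
def DirectEnvyStable (M : Market S C R) (μ : Matching S C R) : Prop :=
  Feasible M μ ∧ IndRational M μ ∧
  (∀ s c r, ¬ DirectEnvyBlocks M μ s c r) ∧
  (∀ s c r, WasteBlocks M μ s c r → ∃ s' r', Dominates M μ s c r s' r')

/-- Weak stability: no direct-envy-blocking contract, and every waste-blocking
contract involves a non-empty resource whose quota is fully used. -/
def WeaklyStable (M : Market S C R) (μ : Matching S C R) : Prop :=
  Feasible M μ ∧ IndRational M μ ∧
  (∀ s c r, ¬ DirectEnvyBlocks M μ s c r) ∧
  (∀ s c (r : Option R), WasteBlocks M μ s c r →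
    ∃ r₁, r = some r₁ ∧ resourceCount μ r₁ = M.qR r₁)

/-- A waste-blocking contract is resource-blocking if the student is already
admitted to the same college. -/
def ResourceBlocks (M : Market S C R) (μ : Matching S C R)
    (s : S) (c : C) (r : Option R) : Prop :=
  WasteBlocks M μ s c r ∧ ∃ r', μ s = some (c, r')

/-- A waste-blocking contract is seat-blocking if the student is not admitted to
the same college. -/
def SeatBlocks (M : Market S C R) (μ : Matching S C R)
    (s : S) (c : C) (r : Option R) : Prop :=
  WasteBlocks M μ s c r ∧ ¬ ∃ r', μ s = some (c, r')

def ResourceEfficient (M : Market S C R) (μ : Matching S C R) : Prop :=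
  ∀ s c r, ¬ ResourceBlocks M μ s c r

def SeatEfficient (M : Market S C R) (μ : Matching S C R) : Prop :=
  ∀ s c r, ¬ SeatBlocks M μ s c r

end Defs

section Cutoffs

variable {S C R : Type} [Fintype S]

/-- A cutoff profile: one cutoff per (college, resource) pair, bounded by the
number of students, with the cutoff for the empty resource the largest. -/
def IsCutoffProfile (St : Type) [Fintype St] {Co Re : Type}
    (K : Co → Option Re → ℕ) : Prop :=
  (∀ c r, K c r ≤ Fintype.card St) ∧ ∀ c (r : Re), K c (some r) ≤ K c none

/-- Rank of student `s` in the priority order of college `c` (0 = best). -/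
noncomputable def studentRank (M : Market S C R) (c : C) (s : S) : ℕ :=
  {s' : S | M.prC c s' s}.ncard

/-- `(s, c, r)` is permitted by the cutoff profile `K` if `s` is among the top
`K c r` students of `c`'s priority order. -/
noncomputable def Permitted (M : Market S C R) (K : C → Option R → ℕ)
    (s : S) (c : C) (r : Option R) : Prop :=
  studentRank M c s < K c r

/-- `μ` is the matching induced by the cutoff profile `K`: every student gets
their most preferred acceptable permitted contract, if any. -/
def IsInduced (M : Market S C R) (K : C → Option R → ℕ) (μ : Matching S C R) : Prop :=
  ∀ s : S,
    (∀ c r, μ s = some (c, r) →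
      Permitted M K s c r ∧ Acceptable M s c r ∧
      ∀ c' r', Permitted M K s c' r' → Acceptable M s c' r' →
        (c', r') ≠ (c, r) → M.prS s (some (c, r)) (some (c', r'))) ∧
    (μ s = none → ∀ c r, ¬ (Permitted M K s c r ∧ Acceptable M s c r))

/-- `K + 1_r^c`: increase the cutoff of `(c, r)` by one (simultaneously increasing
the cutoff of `(c, r0)` if it was equal to that of `(c, r)`). -/
def bump [DecidableEq C] [DecidableEq R] (K : C → Option R → ℕ)
    (c : C) (r : Option R) : C → Option R → ℕ :=
  fun c' r' =>
    if c' = c ∧ (r' = r ∨ (r' = none ∧ r ≠ none ∧ K c none = K c r)) then K c' r' + 1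
    else K c' r'

/-- An optimal cutoff profile: the induced matching is feasible, and increasing any
non-maximal cutoff yields an infeasible induced matching. -/
def OptimalCutoffs [DecidableEq C] [DecidableEq R]
    (M : Market S C R) (K : C → Option R → ℕ) : Prop :=
  IsCutoffProfile S K ∧
  (∀ μ, IsInduced M K μ → Feasible M μ) ∧
  ∀ c r, K c r < Fintype.card S →
    ∀ μ', IsInduced M (bump K c r) μ' → ¬ Feasible M μ'

end Cutoffs

section SD

variable {S C R : Type} [DecidableEq S]

/-- `x` is the most preferred contract of the (unmatched) student `s` given the
current matching `μ`: the best acceptable contract keeping the matching feasible,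
or `none` if there is no such contract. -/
def BestChoice (M : Market S C R) (μ : Matching S C R) (s : S)
    (x : Option (C × Option R)) : Prop :=
  match x with
  | some (c, r) =>
      Acceptable M s c r ∧ Feasible M (Function.update μ s (some (c, r))) ∧
      ∀ c' r', Acceptable M s c' r' → Feasible M (Function.update μ s (some (c', r'))) →
        (c', r') = (c, r) ∨ M.prS s (some (c, r)) (some (c', r'))
  | none => ∀ c r, ¬ (Acceptable M s c r ∧ Feasible M (Function.update μ s (some (c, r))))

/-- A run of the serial dictatorship mechanism on a list of students:
`SDRun M l μ μ'` holds if starting from `μ` and processing the students of `l`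
in order, each one receiving their most preferred feasible acceptable contract,
yields `μ'`. -/
inductive SDRun (M : Market S C R) : List S → Matching S C R → Matching S C R → Prop
  | nil (μ : Matching S C R) : SDRun M [] μ μ
  | cons (s : S) (l : List S) (μ : Matching S C R) (x : Option (C × Option R))
      (μ' : Matching S C R) (hx : BestChoice M μ s x)
      (h : SDRun M l (Function.update μ s x) μ') : SDRun M (s :: l) μ μ'

/-- Student `s` weakly prefers `x` to `y`. -/
def WeaklyPrefers (M : Market S C R) (s : S) (x y : Option (C × Option R)) : Prop :=
  x = y ∨ M.prS s x y

/-- Pareto efficiency for students. -/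
def ParetoEfficient (M : Market S C R) (μ : Matching S C R) : Prop :=
  ¬ ∃ μ' : Matching S C R, Feasible M μ' ∧
    (∀ s, WeaklyPrefers M s (μ' s) (μ s)) ∧ ∃ s, M.prS s (μ' s) (μ s)

end SD

/-- A strict total order induced by an injective rank function (rank 0 = best). -/
lemma isStrictTotalOrder_of_rank {α : Type*} (f : α → ℕ) (hf : Function.Injective f) :
    IsStrictTotalOrder α (fun x y => f x < f y) where
  trichotomous a b := by
    intro h1 h2
    rcases lt_trichotomy (f a) (f b) with h | h | h
    · exact absurd h h1
    · exact hf h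
    · exact absurd h h2
  irrefl a := lt_irrefl (f a)
  trans a b c h1 h2 := lt_trans h1 h2

end RRC

/-!
Envy: if `s` envies `s'` at `(c, r)` with `r ∈ {r', r0}`, then `s` ranks above `s'` at `c` and
`K_{r'}^c ≤ K_r^c`, so `(c, r)` is permitted for `s`, who would have chosen it.

Waste: a waste-blocking `(s, c, r)` is not permitted, so `K_r^c` is not maximal. Raising it
permits new contracts only to the student `s*` of rank exactly `K_r^c` at `c`, so the new induced
matching moves `s*` alone, to some `(c, r*)` with `r* ∈ {r, r0}`; by optimality it is infeasible.
Hence `s* ≠ s`, `s*` outranks `s`, and `(s*, c, r*)` dominates `(s, c, r)`: it neither wastes nor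
direct-envies at `μ`, but once `s` holds `(c, r)`, `s*` may take that seat in place of `s`.
-/

namespace RRC

section

variable {S C R : Type}

instance Market.isStrictTotalOrder_prC (M : Market S C R) (c : C) :
    IsStrictTotalOrder S (M.prC c) :=
  M.prC_sto c

instance Market.isStrictTotalOrder_prS (M : Market S C R) (s : S) :
    IsStrictTotalOrder (Option (C × Option R)) (M.prS s) :=
  M.prS_sto s

section Rank

variable (M : Market S C R) (c : C)

theorem studentRank_lt_studentRank_iff [Finite S] {a b : S} :
    studentRank M c a < studentRank M c b ↔ M.prC c a b := by
  have hlt : ∀ {a b : S}, M.prC c a b → studentRank M c a < studentRank M c b := fun {a b} h =>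
    Set.ncard_lt_ncard
      ((Set.ssubset_iff_of_subset fun x hx => trans_of (M.prC c) hx h).2
        ⟨a, h, irrefl_of (M.prC c) a⟩)
      (Set.toFinite _)
  refine ⟨fun h => ?_, hlt⟩
  rcases trichotomous_of (M.prC c) a b with hab | rfl | hba
  · exact hab
  · exact absurd h (lt_irrefl _)
  · exact absurd h (hlt hba).not_gt

theorem studentRank_injective [Finite S] : Function.Injective (studentRank M c) := by
  intro a b h
  rcases trichotomous_of (M.prC c) a b with hab | hab | hba
  · exact absurd h ((studentRank_lt_studentRank_iff M c).2 hab).ne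
  · exact hab
  · exact absurd h ((studentRank_lt_studentRank_iff M c).2 hba).ne'

theorem studentRank_lt_card [Fintype S] (a : S) : studentRank M c a < Fintype.card S := by
  have h : {x | M.prC c x a} ⊂ Set.univ :=
    (Set.ssubset_iff_of_subset (Set.subset_univ _)).2 ⟨a, trivial, irrefl_of (M.prC c) a⟩
  simpa only [studentRank, Set.ncard_univ, Nat.card_eq_fintype_card] using Set.ncard_lt_ncard h

end Rank

section Feasible

variable {M : Market S C R}

theorem Feasible.of_injective [Finite S] {σ τ : Matching S C R} (hσ : Feasible M σ)
    {e : S → S} (he : Function.Injective e)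
    (hτ : ∀ t c r, τ t = some (c, r) → ∃ r', σ (e t) = some (c, r') ∧ (r = r' ∨ r = none)) :
    Feasible M τ := by
  obtain ⟨hC, hR, hreg⟩ := hσ
  refine ⟨fun c => ?_, fun r => ?_, fun t c r ht => ?_⟩
  · refine (Set.ncard_le_ncard_of_injOn e ?_ he.injOn (Set.toFinite _)).trans (hC c)
    rintro t ⟨r, ht⟩
    obtain ⟨r', hr', -⟩ := hτ t c r ht
    exact ⟨r', hr'⟩
  · refine (Set.ncard_le_ncard_of_injOn e ?_ he.injOn (Set.toFinite _)).trans (hR r)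
    rintro t ⟨c, ht⟩
    obtain ⟨r', hr', rfl | h⟩ := hτ t c (some r) ht
    · exact ⟨c, hr'⟩
    · cases h
  · obtain ⟨r', hr', rfl | h⟩ := hτ t c (some r) ht
    · exact hreg _ _ _ hr'
    · cases h

theorem Feasible.exchange [DecidableEq S] [Finite S] {σ : Matching S C R} (hσ : Feasible M σ)
    {s s' : S} {c : C} {r r' : Option R} (hs : σ s = some (c, r)) (hr' : r' = r ∨ r' = none) :
    Feasible M (Function.update (Function.update σ s none) s' (some (c, r'))) := by
  refine hσ.of_injective (Equiv.swap s s').injective fun t c₁ r₁ ht => ?_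
  by_cases hts' : t = s'
  · subst hts'
    simp only [Function.update_self, Option.some.injEq, Prod.mk.injEq] at ht
    obtain ⟨rfl, rfl⟩ := ht
    exact ⟨r, by rw [Equiv.swap_apply_right, hs], hr'⟩
  · have hts : t ≠ s := by rintro rfl; simp [hts'] at ht
    rw [Function.update_of_ne hts', Function.update_of_ne hts] at ht
    exact ⟨r₁, by rw [Equiv.swap_apply_of_ne_of_ne hts hts', ht], Or.inl rfl⟩

end Feasible

section Induced

variable {M : Market S C R} {K K' : C → Option R → ℕ} {μ μ' : Matching S C R}

theorem IsInduced.indRational (hμ : IsInduced M K μ) : IndRational M μ := by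
  rintro s ⟨c, r⟩ hs
  exact ((hμ s).1 c r hs).2.1

theorem IsInduced.not_prS_none (hμ : IsInduced M K μ) (s : S) : ¬ M.prS s none (μ s) := by
  cases hs : μ s with
  | none => exact irrefl _
  | some x => exact asymm (hμ.indRational s x hs)

theorem IsInduced.acceptable_of_prS (hμ : IsInduced M K μ) {s : S} {c : C} {r : Option R}
    (h : M.prS s (some (c, r)) (μ s)) : Acceptable M s c r := by
  cases hs : μ s with
  | none => rwa [hs] at h
  | some x => rw [hs] at h; exact trans h (hμ.indRational s x hs)

theorem IsInduced.not_permitted_of_prS (hμ : IsInduced M K μ) {s : S} {c : C} {r : Option R}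
    (h : M.prS s (some (c, r)) (μ s)) : ¬ Permitted M K s c r := by
  intro hp
  have hacc := hμ.acceptable_of_prS h
  cases hs : μ s with
  | none => exact (hμ s).2 hs c r ⟨hp, hacc⟩
  | some x =>
    obtain ⟨c', r'⟩ := x
    rw [hs] at h
    have hne : (c, r) ≠ (c', r') := fun he => ne_of_irrefl h (congrArg some he)
    exact asymm h (((hμ s).1 c' r' hs).2.2 c r hp hacc hne)

theorem IsInduced.weaklyPrefers (hμ : IsInduced M K μ) (hμ' : IsInduced M K' μ') {s : S}
    (hK : ∀ c r, Permitted M K s c r → Permitted M K' s c r) :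
    WeaklyPrefers M s (μ' s) (μ s) := by
  cases hs : μ s with
  | none =>
    cases hs' : μ' s with
    | none => exact Or.inl rfl
    | some x => exact Or.inr (hμ'.indRational s x hs')
  | some x =>
    obtain ⟨c, r⟩ := x
    obtain ⟨hp, hacc, -⟩ := (hμ s).1 c r hs
    cases hs' : μ' s with
    | none => exact ((hμ' s).2 hs' c r ⟨hK c r hp, hacc⟩).elim
    | some y =>
      obtain ⟨c', r'⟩ := y
      by_cases he : (c, r) = (c', r')
      · exact Or.inl (by rw [he])
      · exact Or.inr (((hμ' s).1 c' r' hs').2.2 c r (hK c r hp) hacc he)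

theorem IsInduced.apply_eq (hμ : IsInduced M K μ) (hμ' : IsInduced M K' μ') {s : S}
    (hK : ∀ c r, Permitted M K s c r ↔ Permitted M K' s c r) : μ' s = μ s := by
  rcases hμ.weaklyPrefers hμ' fun c r => (hK c r).1 with h | h
  · exact h
  rcases hμ'.weaklyPrefers hμ fun c r => (hK c r).2 with h' | h'
  · exact h'.symm
  exact (asymm h h').elim

theorem exists_isInduced [Finite C] [Finite R] (M : Market S C R) (K : C → Option R → ℕ) :
    ∃ μ : Matching S C R, IsInduced M K μ := by
  set options : S → Set (Option (C × Option R)) :=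
    fun s => {x | x = none ∨ ∃ c r, x = some (c, r) ∧ Permitted M K s c r}
  choose μ hμ hμmin using fun s =>
    (Finite.wellFounded_of_trans_of_irrefl (M.prS s)).has_min (options s) ⟨none, Or.inl rfl⟩
  have hbest : ∀ s, ∀ y ∈ options s, y ≠ μ s → M.prS s (μ s) y := fun s y hy hne =>
    (trichotomous_of (M.prS s) (μ s) y).resolve_right (not_or.2 ⟨hne.symm, hμmin s y hy⟩)
  refine ⟨μ, fun s =>
    ⟨fun c r hs => ⟨?_, ?_, fun c' r' hp _ hne => ?_⟩, fun hs c r ⟨hp, hacc⟩ => ?_⟩⟩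
  · rcases hμ s with h | ⟨c', r', h, hp⟩
    · rw [hs] at h; cases h
    · rw [hs] at h; cases h; exact hp
  · have h := hbest s none (Or.inl rfl) (by rw [hs]; nofun)
    rwa [hs] at h
  · exact hs ▸ hbest s _ (Or.inr ⟨c', r', rfl, hp⟩) (by rw [hs]; simpa using hne)
  · exact hμmin s _ (Or.inr ⟨c, r, rfl, hp⟩) (hs ▸ hacc)

theorem IsInduced.not_directEnvyBlocks [DecidableEq S] [Finite S]
    (hK : ∀ c (r : R), K c (some r) ≤ K c none) (hμ : IsInduced M K μ)
    (s : S) (c : C) (r : Option R) : ¬ DirectEnvyBlocks M μ s c r := by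
  rintro ⟨s', r', ⟨-, hs', hpref, hprio, -⟩, hr⟩
  have hcut : K c r' ≤ K c r := by
    rcases hr with rfl | rfl
    · exact le_rfl
    · cases r' with
      | none => exact le_rfl
      | some r' => exact hK c r'
  refine hμ.not_permitted_of_prS hpref ?_
  calc studentRank M c s < studentRank M c s' := (studentRank_lt_studentRank_iff M c).2 hprio
    _ < K c r' := ((hμ s').1 c r' hs').1
    _ ≤ K c r := hcut

end Induced

section Bump

variable [DecidableEq C] [DecidableEq R] {M : Market S C R} {K : C → Option R → ℕ}
  {c : C} {r : Option R}

theorem le_bump (K : C → Option R → ℕ) (c : C) (r : Option R) (c' : C) (r' : Option R) :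
    K c' r' ≤ bump K c r c' r' := by
  unfold bump
  split_ifs <;> omega

theorem Permitted.of_bump {t : S} {c' : C} {r' : Option R}
    (h : Permitted M (bump K c r) t c' r') :
    Permitted M K t c' r' ∨ c' = c ∧ (r' = r ∨ r' = none) ∧ studentRank M c t = K c r := by
  unfold Permitted bump at h
  split_ifs at h with hb
  · obtain ⟨rfl, hr'⟩ := hb
    have hcut : K c' r' = K c' r := by
      rcases hr' with rfl | ⟨rfl, -, hK⟩
      · rfl
      · exact hK
    rcases Nat.lt_succ_iff_lt_or_eq.1 h with h | h
    · exact Or.inl h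
    · exact Or.inr ⟨rfl, hr'.imp_right And.left, h.trans hcut⟩
  · exact Or.inl h

theorem IsInduced.eq_update_of_bump [DecidableEq S] [Finite S] {μ μ' : Matching S C R}
    (hμ : IsInduced M K μ) (hμ' : IsInduced M (bump K c r) μ') (hne : μ' ≠ μ) :
    ∃ s' r', studentRank M c s' = K c r ∧ (r' = r ∨ r' = none) ∧
      μ' = Function.update μ s' (some (c, r')) ∧ M.prS s' (some (c, r')) (μ s') := by
  have hmono : ∀ t c' r', Permitted M K t c' r' → Permitted M (bump K c r) t c' r' :=
    fun t c' r' h => h.trans_le (le_bump K c r c' r')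
  have hagree : ∀ t, studentRank M c t ≠ K c r → μ' t = μ t := fun t ht =>
    hμ.apply_eq hμ' fun c' r' =>
      ⟨hmono t c' r', fun h => h.of_bump.resolve_right fun h' => ht h'.2.2⟩
  obtain ⟨s', hs'⟩ : ∃ s', μ' s' ≠ μ s' := by
    by_contra! h
    exact hne (funext h)
  have hrank : studentRank M c s' = K c r := by
    by_contra h
    exact hs' (hagree s' h)
  have hpref : M.prS s' (μ' s') (μ s') := (hμ.weaklyPrefers hμ' (hmono s')).resolve_left hs'
  cases hx : μ' s' with
  | none => exact (hμ.not_prS_none s' (hx ▸ hpref)).elim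
  | some x =>
    obtain ⟨c₂, r₂⟩ := x
    rw [hx] at hpref
    obtain ⟨rfl, hr₂, -⟩ := (((hμ' s').1 c₂ r₂ hx).1.of_bump).resolve_left
      (hμ.not_permitted_of_prS hpref)
    refine ⟨s', r₂, hrank, hr₂, funext fun t => ?_, hpref⟩
    by_cases ht : t = s'
    · rw [ht, hx, Function.update_self]
    · rw [Function.update_of_ne ht]
      exact hagree t fun h => ht (studentRank_injective M c₂ (h.trans hrank.symm))

theorem WasteBlocks.exists_dominates [DecidableEq S] [Fintype S] [Finite C] [Finite R]
    {μ : Matching S C R} {s : S} (hK : OptimalCutoffs M K) (hμ : IsInduced M K μ)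
    (hw : WasteBlocks M μ s c r) : ∃ s' r', Dominates M μ s c r s' r' := by
  obtain ⟨⟨-, hKnone⟩, hfeas, hopt⟩ := hK
  obtain ⟨-, hpref, hwfeas⟩ := hw
  have hcut : K c r ≤ studentRank M c s := not_lt.1 (hμ.not_permitted_of_prS hpref)
  obtain ⟨μ', hμ'⟩ := exists_isInduced M (bump K c r)
  have hinf : ¬ Feasible M μ' := hopt c r (hcut.trans_lt (studentRank_lt_card M c s)) μ' hμ'
  obtain ⟨s', r', hrank, hr', rfl, hpref'⟩ :=
    hμ.eq_update_of_bump hμ' fun h => hinf (h ▸ hfeas μ hμ)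
  have hexch := hwfeas.exchange (s' := s') (Function.update_self s (some (c, r)) μ) hr'
  have hss' : s' ≠ s := by
    rintro rfl
    rw [Function.update_idem, Function.update_idem] at hexch
    exact hinf hexch
  have hprio : M.prC c s' s := by
    refine (studentRank_lt_studentRank_iff M c).1 (hrank ▸ hcut.lt_of_ne fun h => ?_)
    exact hss' (studentRank_injective M c (hrank.trans h))
  refine ⟨s', r', ne_of_irrefl' hpref', fun hw' => hinf hw'.2.2,
    hμ.not_directEnvyBlocks hKnone s' c r',
    s, r, ⟨?_, Function.update_self .., ?_, hprio, hexch⟩, hr'⟩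
  · rw [Function.update_of_ne hss']
    exact ne_of_irrefl' hpref'
  · rw [Function.update_of_ne hss']
    exact hpref'

end Bump

end

/-- In any RRC market, if `K` is an optimal cutoff profile, then the
matching induced by `K` is direct-envy stable. -/
theorem induced_of_optimal_directEnvyStable
    {S C R : Type} [Fintype S] [DecidableEq S] [Fintype C] [DecidableEq C]
    [Fintype R] [DecidableEq R]
    (M : Market S C R) (K : C → Option R → ℕ) (hK : OptimalCutoffs M K)
    (μ : Matching S C R) (hμ : IsInduced M K μ) :
    DirectEnvyStable M μ :=
  ⟨hK.2.1 μ hμ, hμ.indRational, hμ.not_directEnvyBlocks hK.1.2,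
    fun _ _ _ hw => hw.exists_dominates hK hμ⟩

end RRC
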